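/- arXiv:1001.3988 — 2 statements merged into one kernel-verified Lean document; each statement's English description precedes it below -/
import Mathlib

section
/- Let K be a field, let E be a purely inseparable field extension of K, and let K' be a separable algebraic field extension of K. Then the tensor product E ⊗_K K' is a field. -/
/-!
In any field `L` receiving both `E` and `K'`, the two images are linearly disjoint over `K`:
a `K`-basis of the separable image stays independent over the purely inseparable one, because
a large enough `p`-th power moves all coefficients into `K`. Taking for `L` the quotient of
`E ⊗[K] K'` by a maximal ideal, linear disjointness makes the quotient map injective, so that
maximal ideal is zero.
-/

open scoped TensorProduct

theorem AlgHom.linearDisjoint_fieldRange_of_isPurelyInseparable_of_isSeparable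
    {K E K' L : Type*} [Field K] [Field E] [Field K'] [Field L]
    [Algebra K E] [Algebra K K'] [Algebra K L] [IsPurelyInseparable K E]
    [Algebra.IsSeparable K K'] (f : E →ₐ[K] L) (g : K' →ₐ[K] L) :
    f.fieldRange.LinearDisjoint g.fieldRange :=
  have := f.equivFieldRange.isPurelyInseparable
  have := AlgEquiv.Algebra.isSeparable g.equivFieldRange
  (g.fieldRange.linearDisjoint_of_isPurelyInseparable_of_isSeparable f.fieldRange).symm

theorem isField_tensorProduct_of_purelyInseparable_of_separable_general
    (K E K' : Type*) [Field K] [Field E] [Field K']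
    [Algebra K E] [Algebra K K']
    [IsPurelyInseparable K E]
    [Algebra.IsSeparable K K'] :
    IsField (E ⊗[K] K') :=
  IntermediateField.LinearDisjoint.isField_of_forall K E K' fun _ _ _ f g ↦
    f.linearDisjoint_fieldRange_of_isPurelyInseparable_of_isSeparable g

/-- If `E` is a purely inseparable field extension of `K` and `K'` is a
separable algebraic field extension of `K`, then the tensor product
`E ⊗[K] K'` is a field. -/
theorem isField_tensorProduct_of_purelyInseparable_of_separable
    (K E K' : Type*) [Field K] [Field E] [Field K']
    [Algebra K E] [Algebra K K']
    [IsPurelyInseparable K E]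
    [Algebra.IsAlgebraic K K'] [Algebra.IsSeparable K K'] :
    IsField (E ⊗[K] K') :=
  isField_tensorProduct_of_purelyInseparable_of_separable_general K E K'
end

section
/- Let k be a perfect field of characteristic p > 0 and let K be a finitely generated field extension of k of transcendence degree d. Let L be an intermediate field, k ⊆ L ⊆ K, containing the subfield K^p = {x^p : x ∈ K}. Then the extension K/L is finite and its degree is p^n for some natural number n with n ≤ d. -/
set_option maxHeartbeats 1000000
set_option synthInstance.maxHeartbeats 400000

open Polynomial IntermediateField

universe v w

/-- If the big field is generated over the base by the empty set or by elements whose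
`p`-th powers lie in the base, then it is finite of degree at most `p ^ m`. -/
private theorem aux_gen (p : ℕ) (hp : p ≠ 0) (E : Type v) [Field E] :
    ∀ (m : ℕ) (F : Type v) [Field F] [Algebra F E] (x : Fin m → E),
      (∀ i, x i ^ p ∈ (algebraMap F E).range) →
      IntermediateField.adjoin F (Set.range x) = ⊤ →
      FiniteDimensional F E ∧ Module.finrank F E ≤ p ^ m := by
  intro m
  induction m with
  | zero =>
    intro F _ _ x _ htop
    rw [Set.range_eq_empty, IntermediateField.adjoin_empty] at htop
    have hsurj : Function.Surjective (algebraMap F E) := fun y => by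
      have hy : y ∈ (⊥ : IntermediateField F E) := htop ▸ IntermediateField.mem_top
      exact IntermediateField.mem_bot.1 hy
    have e : F ≃ₗ[F] E :=
      LinearEquiv.ofBijective (Algebra.linearMap F E) ⟨(algebraMap F E).injective, hsurj⟩
    refine ⟨Module.Finite.equiv e, ?_⟩
    rw [← e.finrank_eq, Module.finrank_self, pow_zero]
  | succ m ih =>
    intro F _ _ x hx htop
    obtain ⟨c, hc⟩ := hx 0
    have haev : (Polynomial.aeval (x 0)) (X ^ p - C c) = 0 := by
      simp [hc]
    have hint : IsIntegral F (x 0) := ⟨X ^ p - C c, monic_X_pow_sub_C c hp, haev⟩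
    haveI hfd1 : FiniteDimensional F F⟮x 0⟯ :=
      IntermediateField.adjoin.finiteDimensional hint
    have hdeg : Module.finrank F F⟮x 0⟯ ≤ p := by
      rw [IntermediateField.adjoin.finrank hint]
      calc (minpoly F (x 0)).natDegree
          ≤ (X ^ p - C c).natDegree :=
            Polynomial.natDegree_le_of_dvd (minpoly.dvd F _ haev)
              (monic_X_pow_sub_C c hp).ne_zero
        _ = p := natDegree_X_pow_sub_C
    have htail : IntermediateField.adjoin F⟮x 0⟯ (Set.range (x ∘ Fin.succ)) = ⊤ := by
      apply IntermediateField.restrictScalars_injective F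
      rw [IntermediateField.restrictScalars_top, IntermediateField.restrictScalars_adjoin,
        eq_top_iff, ← htop]
      apply IntermediateField.adjoin_le_iff.2
      rintro _ ⟨i, rfl⟩
      rcases Fin.eq_zero_or_eq_succ i with h0 | ⟨j, rfl⟩
      · subst h0
        exact IntermediateField.subset_adjoin F _
          (Set.mem_union_left _ (IntermediateField.mem_adjoin_simple_self F (x 0)))
      · exact IntermediateField.subset_adjoin F _ (Set.mem_union_right _ ⟨j, rfl⟩)
    have hpowtail : ∀ i, (x ∘ Fin.succ) i ^ p ∈ (algebraMap F⟮x 0⟯ E).range := fun i => by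
      obtain ⟨c', hc'⟩ := hx i.succ
      exact ⟨algebraMap F F⟮x 0⟯ c', by rw [← IsScalarTower.algebraMap_apply]; exact hc'⟩
    obtain ⟨h1, h2⟩ := ih F⟮x 0⟯ (x ∘ Fin.succ) hpowtail htail
    refine ⟨FiniteDimensional.trans F F⟮x 0⟯ E, ?_⟩
    rw [← Module.finrank_mul_finrank F F⟮x 0⟯ E, pow_succ']
    exact Nat.mul_le_mul hdeg h2

/-- A finitely generated field extension with all `p`-th powers in an intermediate field
is finite over that intermediate field. -/
private theorem aux_fin (p : ℕ) (hp : p ≠ 0) {k K : Type*} [Field k] [Field K] [Algebra k K]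
    (hfg : (⊤ : IntermediateField k K).FG)
    (L : IntermediateField k K) (hL : ∀ x : K, x ^ p ∈ L) : FiniteDimensional L K := by
  obtain ⟨S, hS⟩ := hfg
  have hadj : IntermediateField.adjoin (↥L) ((S : Set K)) = ⊤ := by
    apply IntermediateField.restrictScalars_injective k
    rw [IntermediateField.restrictScalars_top, IntermediateField.restrictScalars_adjoin,
      eq_top_iff, ← hS]
    exact (IntermediateField.adjoin.mono k _ _ Set.subset_union_right)
  have hint : ∀ y ∈ (S : Set K), IsIntegral (↥L) y := fun y _ => by
    refine ⟨X ^ p - C (⟨y ^ p, hL y⟩ : L), monic_X_pow_sub_C _ hp, ?_⟩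
    have h1 : (algebraMap (↥L) K) (⟨y ^ p, hL y⟩ : L) = y ^ p := rfl
    simp [h1]
  have h2 := IntermediateField.finiteDimensional_adjoin (K := ↥L) hint
  rw [hadj] at h2
  exact (IntermediateField.topEquiv (F := ↥L) (E := K)).toLinearEquiv.finiteDimensional

/-- A finite extension in which every `p`-th power lies in the base has degree a power of `p`. -/
private theorem aux_pow (p : ℕ) (hp : p.Prime) (K : Type v) [Field K] :
    ∀ (N : ℕ) (L : Type v) [Field L] [Algebra L K] [CharP L p], FiniteDimensional L K →
      (∀ x : K, x ^ p ∈ (algebraMap L K).range) → Module.finrank L K ≤ N →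
      ∃ n : ℕ, Module.finrank L K = p ^ n := by
  intro N
  induction N with
  | zero =>
    intro L _ _ _ hfd _ hle
    haveI := hfd
    have := Module.finrank_pos (R := L) (M := K)
    omega
  | succ N ih =>
    intro L _ _ _ hfd hpow hle
    haveI := hfd
    haveI : ExpChar L p := .prime hp
    haveI : IsPurelyInseparable L K := by
      rw [isPurelyInseparable_iff_pow_mem L p]
      intro x
      exact ⟨1, by simpa using hpow x⟩
    by_cases h1 : Module.finrank L K = 1
    · exact ⟨0, by simpa using h1⟩
    · have hbot : (⊥ : Subalgebra L K) ≠ ⊤ := fun h =>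
        h1 (Subalgebra.bot_eq_top_iff_finrank_eq_one.1 h)
      obtain ⟨x, hx⟩ : ∃ x : K, x ∉ (⊥ : Subalgebra L K) := by
        by_contra h
        push_neg at h
        exact hbot (eq_top_iff.2 fun y _ => h y)
      obtain ⟨j, y, hmin⟩ := IsPurelyInseparable.minpoly_eq_X_pow_sub_C L p x
      have hxint : IsIntegral L x := IsIntegral.of_finite L x
      have hfr1 : Module.finrank L L⟮x⟯ = p ^ j := by
        rw [IntermediateField.adjoin.finrank hxint, hmin, natDegree_X_pow_sub_C]
      have hj : j ≠ 0 := by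
        intro h
        subst h
        have : Module.finrank L L⟮x⟯ = 1 := by simpa using hfr1
        rw [IntermediateField.finrank_eq_one_iff] at this
        have hxb : x ∈ (⊥ : IntermediateField L K) :=
          this ▸ IntermediateField.mem_adjoin_simple_self L x
        exact hx (Algebra.mem_bot.2 (IntermediateField.mem_bot.1 hxb))
      haveI : FiniteDimensional L⟮x⟯ K := FiniteDimensional.right L L⟮x⟯ K
      haveI : CharP K p :=
        charP_of_injective_algebraMap (algebraMap L K).injective p
      haveI : CharP L⟮x⟯ p :=
        (algebraMap L⟮x⟯ K).charP (algebraMap L⟮x⟯ K).injective p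
      have hmul : Module.finrank L L⟮x⟯ * Module.finrank L⟮x⟯ K = Module.finrank L K :=
        Module.finrank_mul_finrank L L⟮x⟯ K
      have hpos : 0 < Module.finrank L⟮x⟯ K := Module.finrank_pos
      have hlt : Module.finrank L⟮x⟯ K ≤ N := by
        have hge : 2 ≤ Module.finrank L L⟮x⟯ := by
          rw [hfr1]
          calc 2 ≤ p := hp.two_le
            _ ≤ p ^ j := Nat.le_self_pow hj p
        nlinarith [hmul, hle, hpos]
      have hpow' : ∀ z : K, z ^ p ∈ (algebraMap L⟮x⟯ K).range := fun z => by
        obtain ⟨c, hc⟩ := hpow z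
        exact ⟨algebraMap L L⟮x⟯ c, by rw [← IsScalarTower.algebraMap_apply]; exact hc⟩
      obtain ⟨n, hn⟩ := ih L⟮x⟯ inferInstance hpow' hlt
      exact ⟨j + n, by rw [← hmul, hfr1, hn, pow_add]⟩

/-- Let `k` be a perfect field of characteristic `p > 0` and `K` a finitely
generated field extension of `k` of transcendence degree `d`.  If `L` is an
intermediate field of `K/k` containing the subfield `K^p` of `p`-th powers,
then `K/L` is finite of degree `p ^ n` for some `n ≤ d`. -/
theorem finrank_eq_pow_of_frobenius_range_le
    (p d : ℕ) [Fact p.Prime]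
    (k K : Type*) [Field k] [Field K] [Algebra k K]
    [CharP k p] [CharP K p] [PerfectField k]
    (hfg : (⊤ : IntermediateField k K).FG)
    (b : Fin d → K) (hb : IsTranscendenceBasis k b)
    (L : IntermediateField k K) (hL : ∀ x : K, x ^ p ∈ L) :
    FiniteDimensional L K ∧ ∃ n ≤ d, Module.finrank L K = p ^ n := by
  have hp : p.Prime := Fact.out
  haveI : ExpChar K p := .prime hp
  haveI : ExpChar k p := .prime hp
  haveI : CharP (↥L) p := (algebraMap (↥L) K).charP (algebraMap (↥L) K).injective p
  have hfd : FiniteDimensional (↥L) K := aux_fin p hp.ne_zero hfg L hL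
  obtain ⟨n, hn⟩ := aux_pow p hp K (Module.finrank (↥L) K) (↥L) hfd
    (fun x => ⟨⟨x ^ p, hL x⟩, rfl⟩) le_rfl
  refine ⟨hfd, n, ?_, hn⟩
  -- It remains to show `n ≤ d`; we bound `finrank L K ≤ p ^ d`.
  set φ : K →+* K := frobenius K p with hφ
  set F : IntermediateField k K := IntermediateField.adjoin k (Set.range b) with hF
  set FS : Subfield K := F.toSubfield with hFS
  set FbS : Subfield K := FS.map φ with hFbS
  set KbS : Subfield K := φ.fieldRange with hKbS
  set LS : Subfield K := L.toSubfield with hLS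
  have hFbF : FbS ≤ FS := by
    rintro _ ⟨y, hy, rfl⟩
    have : φ y = y ^ p := frobenius_def p y
    rw [this]
    exact pow_mem hy p
  have hFbKb : FbS ≤ KbS := by
    rintro _ ⟨y, hy, rfl⟩
    exact ⟨y, rfl⟩
  have hKbL : KbS ≤ LS := by
    rintro _ ⟨y, rfl⟩
    have : φ y = y ^ p := frobenius_def p y
    rw [this]
    exact hL y
  have kFb : ∀ a : k, algebraMap k K a ∈ FbS := fun a => by
    obtain ⟨c, hc⟩ := surjective_frobenius k p a
    refine ⟨algebraMap k K c, F.algebraMap_mem c, ?_⟩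
    have h1 : φ (algebraMap k K c) = (algebraMap k K c) ^ p := frobenius_def p _
    have h2 : (frobenius k p) c = c ^ p := frobenius_def p c
    rw [h1, ← map_pow, ← h2, hc]
  -- `K` is algebraic over `F`, hence over `FS`.
  haveI halg : Algebra.IsAlgebraic (↥F) K := hb.isAlgebraic_field
  have htrans : ∀ z : K, IsIntegral (↥FS) z := fun z => by
    obtain ⟨q, hqm, hq0⟩ := (Algebra.IsAlgebraic.isAlgebraic (R := ↥F) z).isIntegral
    exact ⟨q, hqm, hq0⟩
  -- `K` is finite over `FS`.
  have hFSfin : FiniteDimensional (↥FS) K := by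
    obtain ⟨S, hS⟩ := hfg
    have hadj : IntermediateField.adjoin (↥FS) ((S : Set K)) = ⊤ := by
      rw [eq_top_iff]
      intro z _
      have hz : z ∈ (⊤ : IntermediateField k K) := trivial
      rw [← hS] at hz
      have hsub : IntermediateField.adjoin k (S : Set K) ≤
          Subfield.toIntermediateField (IntermediateField.adjoin (↥FS) ((S : Set K))).toSubfield
            (fun a => (IntermediateField.adjoin (↥FS) ((S : Set K))).algebraMap_mem
              ⟨algebraMap k K a, hFbF (kFb a)⟩) := by
        apply IntermediateField.adjoin_le_iff.2
        intro y hy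
        exact IntermediateField.subset_adjoin (↥FS) _ hy
      exact hsub hz
    have h2 := IntermediateField.finiteDimensional_adjoin (K := ↥FS)
      (fun y (_ : y ∈ (S : Set K)) => htrans y)
    rw [hadj] at h2
    exact (IntermediateField.topEquiv (F := ↥FS) (E := K)).toLinearEquiv.finiteDimensional
  -- The generation bound: `relfinrank FbS FS ≤ p ^ d`.
  have hbF : ∀ i, b i ∈ FS := fun i => IntermediateField.subset_adjoin k _ ⟨i, rfl⟩
  set E' : IntermediateField (↥FbS) K := Subfield.extendScalars hFbF with hE'
  set xg : Fin d → ↥E' := fun i => ⟨b i, hbF i⟩ with hxg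
  have hxgpow : ∀ i, xg i ^ p ∈ (algebraMap (↥FbS) ↥E').range := fun i => by
    refine ⟨⟨b i ^ p, ⟨b i, hbF i, frobenius_def p (b i)⟩⟩, ?_⟩
    apply Subtype.ext
    show (b i : K) ^ p = ((xg i : ↥E') : K) ^ p
    rfl
  have hgenb : IntermediateField.adjoin (↥FbS) (Set.range b) = E' := by
    apply le_antisymm
    · apply IntermediateField.adjoin_le_iff.2
      rintro _ ⟨i, rfl⟩
      exact (Subfield.mem_extendScalars hFbF).2 (hbF i)
    · rw [Subfield.extendScalars_le_iff]
      intro y hy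
      have hsub : F ≤ Subfield.toIntermediateField
          (IntermediateField.adjoin (↥FbS) (Set.range b)).toSubfield
          (fun a => (IntermediateField.adjoin (↥FbS) (Set.range b)).algebraMap_mem
            ⟨algebraMap k K a, kFb a⟩) := by
        apply IntermediateField.adjoin_le_iff.2
        rintro _ ⟨i, rfl⟩
        exact IntermediateField.subset_adjoin (↥FbS) _ ⟨i, rfl⟩
      exact hsub hy
  have hgen : IntermediateField.adjoin (↥FbS) (Set.range xg) = ⊤ := by
    have himg : Subtype.val '' Set.range xg = Set.range b := by
      ext z
      constructor
      · rintro ⟨_, ⟨i, rfl⟩, rfl⟩; exact ⟨i, rfl⟩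
      · rintro ⟨i, rfl⟩; exact ⟨xg i, ⟨i, rfl⟩, rfl⟩
    have h7 : IntermediateField.lift (IntermediateField.adjoin (↥FbS) (Set.range xg))
        = IntermediateField.lift (⊤ : IntermediateField (↥FbS) ↥E') := by
      rw [IntermediateField.lift_adjoin, IntermediateField.lift_top, himg, hgenb]
    exact IntermediateField.map_injective E'.val h7
  obtain ⟨hE'fin, hE'rank⟩ := aux_gen p hp.ne_zero (↥E') d (↥FbS) xg hxgpow hgen
  have h5a : Subfield.relfinrank FbS FS = Module.finrank (↥FbS) ↥E' :=
    Subfield.relfinrank_eq_finrank_of_le hFbF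
  have h5 : Subfield.relfinrank FbS FS ≤ p ^ d := by rw [h5a]; exact hE'rank
  have h5pos : 0 < Subfield.relfinrank FbS FS := by
    rw [h5a]
    exact Module.finrank_pos
  -- Frobenius: `finrank FS K = relfinrank FbS KbS`.
  have hcomap : FbS.comap φ = FS := by
    ext z
    simp only [Subfield.mem_comap, hFbS, Subfield.mem_map]
    constructor
    · rintro ⟨w, hw, hwz⟩
      have : w = z := frobenius_inj K p hwz
      exact this ▸ hw
    · intro hz
      exact ⟨z, hz, rfl⟩
  have hfrob : Module.finrank (↥FS) K = Subfield.relfinrank FbS KbS := by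
    have := Subfield.finrank_comap (A := FbS) φ
    rw [hcomap] at this
    exact this
  -- tower laws
  have T3 := Subfield.relfinrank_mul_finrank_top hFbF
  have T2 := Subfield.relfinrank_mul_finrank_top hFbKb
  have T1 := Subfield.relfinrank_mul_finrank_top hKbL
  haveI := hFSfin
  have hFSpos : 0 < Module.finrank (↥FS) K := Module.finrank_pos
  have hKbK : Module.finrank (↥KbS) K = Subfield.relfinrank FbS FS := by
    rw [← hfrob] at T2
    rw [← T3] at T2
    have T2' : Module.finrank (↥FS) K * Module.finrank (↥KbS) K
        = Module.finrank (↥FS) K * Subfield.relfinrank FbS FS := by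
      rw [T2, Nat.mul_comm]
    exact Nat.eq_of_mul_eq_mul_left hFSpos T2'
  have hdvd : Module.finrank (↥LS) K ∣ Module.finrank (↥KbS) K :=
    Dvd.intro_left _ T1
  have hKbpos : 0 < Module.finrank (↥KbS) K := by rw [hKbK]; exact h5pos
  have hLSle : Module.finrank (↥LS) K ≤ p ^ d :=
    le_trans (Nat.le_of_dvd hKbpos hdvd) (by rw [hKbK]; exact h5)
  have hLL : Module.finrank (↥L) K = Module.finrank (↥LS) K := rfl
  have hfin : (p : ℕ) ^ n ≤ p ^ d := by
    rw [← hn, hLL]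
    exact hLSle
  exact (Nat.pow_le_pow_iff_right hp.one_lt).1 hfin
end
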